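/- arXiv:2601.21156 — 10 statements merged into one kernel-verified Lean document; each statement's English description precedes it below -/
import Mathlib

section
/- Let C be a commutative fuzzy conjunction such that its natural negation N_C is a fuzzy negation. If N_C is continuous, then N_C is an involution, i.e., N_C(N_C(x)) = x for all x ∈ [0,1]. -/
open Set

def unitI : Set ℝ := Set.Icc 0 1

/-- A fuzzy conjunction on [0,1]. -/
def IsFuzzyConj (C : ℝ → ℝ → ℝ) : Prop :=
  (∀ x ∈ unitI, ∀ y ∈ unitI, C x y ∈ unitI) ∧
  (∀ y ∈ unitI, ∀ x₁ ∈ unitI, ∀ x₂ ∈ unitI, x₁ ≤ x₂ → C x₁ y ≤ C x₂ y) ∧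
  (∀ x ∈ unitI, ∀ y₁ ∈ unitI, ∀ y₂ ∈ unitI, y₁ ≤ y₂ → C x y₁ ≤ C x y₂) ∧
  C 1 1 = 1 ∧ C 0 0 = 0 ∧ C 1 0 = 0 ∧ C 0 1 = 0

/-- A fuzzy disjunction on [0,1]. -/
def IsFuzzyDisj (D : ℝ → ℝ → ℝ) : Prop :=
  (∀ x ∈ unitI, ∀ y ∈ unitI, D x y ∈ unitI) ∧
  (∀ y ∈ unitI, ∀ x₁ ∈ unitI, ∀ x₂ ∈ unitI, x₁ ≤ x₂ → D x₁ y ≤ D x₂ y) ∧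
  (∀ x ∈ unitI, ∀ y₁ ∈ unitI, ∀ y₂ ∈ unitI, y₁ ≤ y₂ → D x y₁ ≤ D x y₂) ∧
  D 0 0 = 0 ∧ D 1 1 = 1 ∧ D 1 0 = 1 ∧ D 0 1 = 1

/-- A fuzzy negation on [0,1]. -/
def IsFuzzyNeg (N : ℝ → ℝ) : Prop :=
  (∀ x ∈ unitI, N x ∈ unitI) ∧ N 0 = 1 ∧ N 1 = 0 ∧
  (∀ x ∈ unitI, ∀ y ∈ unitI, x ≤ y → N y ≤ N x)

/-- A fuzzy implication on [0,1]. -/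
def IsFuzzyImpl (I : ℝ → ℝ → ℝ) : Prop :=
  (∀ x ∈ unitI, ∀ y ∈ unitI, I x y ∈ unitI) ∧
  (∀ y ∈ unitI, ∀ x₁ ∈ unitI, ∀ x₂ ∈ unitI, x₁ ≤ x₂ → I x₂ y ≤ I x₁ y) ∧
  (∀ x ∈ unitI, ∀ y₁ ∈ unitI, ∀ y₂ ∈ unitI, y₁ ≤ y₂ → I x y₁ ≤ I x y₂) ∧
  I 0 0 = 1 ∧ I 1 1 = 1 ∧ I 1 0 = 0

/-- The natural negation of a fuzzy conjunction. -/
noncomputable def natNegC (C : ℝ → ℝ → ℝ) (x : ℝ) : ℝ :=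
  sSup {t | t ∈ unitI ∧ C x t = 0}

/-- The natural negation of a fuzzy disjunction. -/
noncomputable def natNegD (D : ℝ → ℝ → ℝ) (x : ℝ) : ℝ :=
  sInf {t | t ∈ unitI ∧ D x t = 1}

theorem stmt_4 (C : ℝ → ℝ → ℝ) (hC : IsFuzzyConj C)
    (hcomm : ∀ x ∈ unitI, ∀ y ∈ unitI, C x y = C y x)
    (hN : IsFuzzyNeg (natNegC C))
    (hcont : ContinuousOn (natNegC C) unitI) :
    ∀ x ∈ unitI, natNegC C (natNegC C x) = x := by
  obtain ⟨hrange, hmono1, hmono2, h11, h00, h10, h01⟩ := hC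
  obtain ⟨hNr, hN0, hN1, hNanti⟩ := hN
  set N := natNegC C with hNdef
  have h0u : (0:ℝ) ∈ unitI := ⟨le_refl 0, zero_le_one⟩
  have h1u : (1:ℝ) ∈ unitI := ⟨zero_le_one, le_refl 1⟩
  have hx0 : ∀ x ∈ unitI, C x 0 = 0 := fun x hx =>
    le_antisymm (by simpa [h10] using hmono1 0 h0u x hx 1 h1u hx.2) (hrange x hx 0 h0u).1
  have hbdd : ∀ x : ℝ, BddAbove {t | t ∈ unitI ∧ C x t = 0} :=
    fun x => ⟨1, fun t ht => ht.1.2⟩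
  have hne : ∀ x ∈ unitI, ({t | t ∈ unitI ∧ C x t = 0}).Nonempty :=
    fun x hx => ⟨0, h0u, hx0 x hx⟩
  have hmem_le : ∀ x ∈ unitI, ∀ t ∈ unitI, C x t = 0 → t ≤ N x :=
    fun x _ t ht hct => le_csSup (hbdd x) ⟨ht, hct⟩
  have hlt_zero : ∀ x ∈ unitI, ∀ t ∈ unitI, t < N x → C x t = 0 := by
    intro x hx t ht hlt
    obtain ⟨t', ht', hlt'⟩ := exists_lt_of_lt_csSup (hne x hx) hlt
    have h := hmono2 x hx t ht t' ht'.1 (le_of_lt hlt')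
    exact le_antisymm (h.trans_eq ht'.2) (hrange x hx t ht).1
  have key : ∀ x ∈ unitI, x ≤ N (N x) := by
    intro x hx
    rcases eq_or_lt_of_le (hNr x hx).1 with h0 | h0
    · rw [← h0, hN0]; exact hx.2
    · -- N x > 0 : take left limit
      have hsub : Ico (0:ℝ) (N x) ⊆ unitI :=
        fun t ht => ⟨ht.1, le_of_lt (lt_of_lt_of_le ht.2 (hNr x hx).2)⟩
      have hc : ContinuousWithinAt N unitI (N x) := hcont.continuousWithinAt (hNr x hx)
      have htend : Filter.Tendsto N (nhdsWithin (N x) (Ico 0 (N x))) (nhds (N (N x))) :=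
        hc.tendsto.comp (tendsto_nhdsWithin_mono_left hsub Filter.tendsto_id)
      have hnb : (nhdsWithin (N x) (Ico (0:ℝ) (N x))).NeBot := by
        apply mem_closure_iff_nhdsWithin_neBot.mp
        rw [closure_Ico (ne_of_lt h0)]
        exact ⟨(hNr x hx).1, le_refl _⟩
      refine ge_of_tendsto htend ?_
      filter_upwards [self_mem_nhdsWithin] with t ht
      have htu : t ∈ unitI := hsub ht
      have hc0 : C x t = 0 := hlt_zero x hx t htu ht.2
      have hc0' : C t x = 0 := by rw [hcomm t htu x hx]; exact hc0
      exact hmem_le t htu x hx hc0'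
  intro x hx
  -- surjectivity via IVT
  have hmem : x ∈ Icc (N 1) (N 0) := by rw [hN0, hN1]; exact hx
  have hIVT := intermediate_value_Icc' (zero_le_one (α := ℝ)) hcont
  obtain ⟨s, hs, hNs⟩ := hIVT hmem
  have hs' : s ∈ unitI := hs
  have h1 : s ≤ N x := by rw [← hNs]; exact key s hs'
  have h2 : N (N x) ≤ x := by
    have := hNanti s hs' (N x) (hNr x hx) h1
    rwa [hNs] at this
  exact le_antisymm h2 (key x hx)
end

section
/- Let C be a commutative fuzzy conjunction whose natural negation N_C is a fuzzy negation. If N_C is not continuous, then N_C is not strictly decreasing. -/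
open Set

theorem stmt_5 (C : ℝ → ℝ → ℝ) (hC : IsFuzzyConj C)
    (hcomm : ∀ x ∈ unitI, ∀ y ∈ unitI, C x y = C y x)
    (hN : IsFuzzyNeg (natNegC C))
    (hnc : ¬ ContinuousOn (natNegC C) unitI) :
    ¬ StrictAntiOn (natNegC C) unitI := by
  intro hsa
  apply hnc
  set N := natNegC C with hNdef
  have h0 : (0:ℝ) ∈ unitI := ⟨le_refl 0, zero_le_one⟩
  have h1 : (1:ℝ) ∈ unitI := ⟨zero_le_one, le_refl 1⟩
  -- C x 0 = 0 for x ∈ unitI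
  have hCx0 : ∀ x ∈ unitI, C x 0 = 0 := by
    intro x hx
    have h1' : C x 0 ≤ C 1 0 := hC.2.1 0 h0 x hx 1 h1 hx.2
    have h2' : (0:ℝ) ≤ C x 0 := (hC.1 x hx 0 h0).1
    have := hC.2.2.2.2.2.1
    linarith
  have hZne : ∀ x ∈ unitI, Set.Nonempty {t | t ∈ unitI ∧ C x t = 0} := by
    intro x hx; exact ⟨0, h0, hCx0 x hx⟩
  have hZbdd : ∀ x : ℝ, BddAbove {t | t ∈ unitI ∧ C x t = 0} := by
    intro x; exact ⟨1, fun t ht => ht.1.2⟩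
  -- key property: t < N x → x ≤ N t
  have key : ∀ x ∈ unitI, ∀ t ∈ unitI, t < N x → x ≤ N t := by
    intro x hx t ht hlt
    obtain ⟨s, hs, hts⟩ := exists_lt_of_lt_csSup (hZne x hx) hlt
    have hCxt : C x t = 0 := by
      have hle : C x t ≤ C x s := hC.2.2.1 x hx t ht s hs.1 hts.le
      have hge : (0:ℝ) ≤ C x t := (hC.1 x hx t ht).1
      rw [hs.2] at hle; linarith
    have hCtx : C t x = 0 := by rw [hcomm t ht x hx]; exact hCxt
    exact le_csSup (hZbdd t) ⟨hx, hCtx⟩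
  -- involution: N (N y) = y on unitI
  have hNmem : ∀ x ∈ unitI, N x ∈ unitI := hN.1
  have inv : ∀ y ∈ unitI, N (N y) = y := by
    intro y hy
    have hx : N y ∈ unitI := hNmem y hy
    rcases lt_trichotomy (N (N y)) y with h | h | h
    · obtain ⟨z, hz1, hz2⟩ := exists_between h
      have hzI : z ∈ unitI := ⟨le_trans (hNmem _ hx).1 hz1.le, le_trans hz2.le hy.2⟩
      have h1' : N z ≤ N y := by
        by_contra hcon
        push_neg at hcon
        exact absurd (key z hzI (N y) hx hcon) (not_le.mpr hz1)
      have h2' : N y < N z := hsa hzI hy hz2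
      linarith
    · exact h
    · obtain ⟨z, hz1, hz2⟩ := exists_between h
      have hzI : z ∈ unitI := ⟨le_trans hy.1 hz1.le, le_trans hz2.le (hNmem _ hx).2⟩
      have h1' : N y ≤ N z := key (N y) hx z hzI hz2
      have h2' : N z < N y := hsa hy hzI hz1
      linarith
  -- strict monotone negative version
  set g : ℝ → ℝ := fun x => -(N x) with hgdef
  have hg : StrictMonoOn g unitI := fun a ha b hb hab => neg_lt_neg (hsa ha hb hab)
  -- N is positive below 1, less than 1 above 0
  have hN1 : N 1 = 0 := hN.2.2.1
  have hN0 : N 0 = 1 := hN.2.1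
  have hNpos : ∀ a ∈ unitI, a < 1 → 0 < N a := by
    intro a ha halt
    have := hsa ha h1 halt
    rw [hN1] at this; exact this
  have hNlt1 : ∀ a ∈ unitI, 0 < a → N a < 1 := by
    intro a ha halt
    have := hsa h0 ha halt
    rw [hN0] at this; exact this
  -- continuity of g
  have hgcont : ContinuousOn g unitI := by
    intro a ha
    have hright : a < 1 → ContinuousWithinAt g (Ici a) a := by
      intro halt
      apply hg.continuousWithinAt_right_of_exists_between
        (Icc_mem_nhdsGE_of_mem ⟨ha.1, halt⟩)
      intro b hb
      have hNapos : 0 < N a := hNpos a ha halt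
      set y : ℝ := max (-b) 0 with hydef
      have hyltNa : y < N a := by
        apply max_lt _ hNapos
        simp only [hgdef] at hb; linarith
      have hyI : y ∈ unitI := ⟨le_max_right _ _, le_trans hyltNa.le (hNmem a ha).2⟩
      refine ⟨N y, hNmem y hyI, ?_, ?_⟩
      · simp only [hgdef, inv y hyI]; exact neg_lt_neg hyltNa
      · simp only [hgdef, inv y hyI]
        have : -b ≤ y := le_max_left _ _
        linarith
    have hleft : 0 < a → ContinuousWithinAt g (Iic a) a := by
      intro halt
      apply hg.continuousWithinAt_left_of_exists_between
        (Icc_mem_nhdsLE_of_mem ⟨halt, ha.2⟩)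
      intro b hb
      have hNalt1 : N a < 1 := hNlt1 a ha halt
      set y : ℝ := min (-b) 1 with hydef
      have hygtNa : N a < y := by
        apply lt_min _ hNalt1
        simp only [hgdef] at hb; linarith
      have hyI : y ∈ unitI := ⟨le_trans (hNmem a ha).1 hygtNa.le, min_le_right _ _⟩
      refine ⟨N y, hNmem y hyI, ?_, ?_⟩
      · simp only [hgdef, inv y hyI]
        have : y ≤ -b := min_le_left _ _
        linarith
      · simp only [hgdef, inv y hyI]; exact neg_lt_neg hygtNa
    rcases eq_or_lt_of_le ha.1 with h0a | h0a
    · exact (hright (h0a ▸ one_pos)).mono (fun x hx => h0a ▸ hx.1)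
    · rcases eq_or_lt_of_le ha.2 with ha1 | ha1
      · exact (hleft h0a).mono (fun x hx => ha1 ▸ hx.2)
      · have : ContinuousAt g a :=
          continuousAt_iff_continuous_left_right.2 ⟨hleft h0a, hright ha1⟩
        exact this.continuousWithinAt
  have : ContinuousOn (fun x => -(g x)) unitI := hgcont.neg
  simp only [hgdef, neg_neg] at this
  exact this
end

section
/- Let C be a commutative fuzzy conjunction whose natural negation N_C is a fuzzy negation. Then the following are equivalent: (i) N_C is strictly decreasing; (ii) N_C is continuous; (iii) N_C is strict (continuous and strictly decreasing); (iv) N_C is strong (an involution). -/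
open Set

lemma unit_zero : (0:ℝ) ∈ unitI := by constructor <;> norm_num

lemma unit_one : (1:ℝ) ∈ unitI := by constructor <;> norm_num

lemma natNegC_bdd (C : ℝ → ℝ → ℝ) (x : ℝ) : BddAbove {t | t ∈ unitI ∧ C x t = 0} :=
  ⟨1, fun t ht => ht.1.2⟩

lemma conj_zero_right (C : ℝ → ℝ → ℝ) (hC : IsFuzzyConj C) {x : ℝ} (hx : x ∈ unitI) :
    C x 0 = 0 := by
  have h1 : C x 0 ≤ C 1 0 := hC.2.1 0 unit_zero x hx 1 unit_one hx.2
  have h0 : 0 ≤ C x 0 := (hC.1 x hx 0 unit_zero).1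
  have h2 : C 1 0 = 0 := hC.2.2.2.2.2.1
  linarith

/-- membership in the zero set gives a lower bound for the natural negation -/
lemma le_natNegC (C : ℝ → ℝ → ℝ) {x t : ℝ} (ht : t ∈ unitI) (h : C x t = 0) :
    t ≤ natNegC C x :=
  le_csSup (natNegC_bdd C x) ⟨ht, h⟩

/-- below the natural negation, the conjunction vanishes -/
lemma conj_eq_zero_of_lt (C : ℝ → ℝ → ℝ) (hC : IsFuzzyConj C) {x t : ℝ}
    (hx : x ∈ unitI) (ht : t ∈ unitI) (h : t < natNegC C x) : C x t = 0 := by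
  have hne : Set.Nonempty {t | t ∈ unitI ∧ C x t = 0} :=
    ⟨0, unit_zero, conj_zero_right C hC hx⟩
  obtain ⟨s, hs, hts⟩ := exists_lt_of_lt_csSup hne h
  have hle : C x t ≤ C x s := hC.2.2.1 x hx t ht s hs.1 hts.le
  have h0 : 0 ≤ C x t := (hC.1 x hx t ht).1
  have := hs.2
  linarith

theorem stmt_6 (C : ℝ → ℝ → ℝ) (hC : IsFuzzyConj C)
    (hcomm : ∀ x ∈ unitI, ∀ y ∈ unitI, C x y = C y x)
    (hN : IsFuzzyNeg (natNegC C)) :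
    List.TFAE [StrictAntiOn (natNegC C) unitI,
      ContinuousOn (natNegC C) unitI,
      ContinuousOn (natNegC C) unitI ∧ StrictAntiOn (natNegC C) unitI,
      ∀ x ∈ unitI, natNegC C (natNegC C x) = x] := by
  set N := natNegC C with hNdef
  have hmem : ∀ x ∈ unitI, N x ∈ unitI := hN.1
  have hanti : ∀ x ∈ unitI, ∀ y ∈ unitI, x ≤ y → N y ≤ N x := hN.2.2.2
  have hN0 : N 0 = 1 := hN.2.1
  have hN1 : N 1 = 0 := hN.2.2.1
  -- key implication: 1 → 4
  tfae_have 1 → 4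
  | hs => by
    intro x hx
    have hNx := hmem x hx
    have hNNx := hmem _ hNx
    -- N (N x) ≥ x
    have hge : x ≤ N (N x) := by
      by_contra hlt
      push_neg at hlt
      set t := (N (N x) + x) / 2 with htdef
      have ht1 : N (N x) < t := by simp only [htdef]; linarith
      have ht2 : t < x := by simp only [htdef]; linarith
      have htI : t ∈ unitI := ⟨le_trans hNNx.1 ht1.le, le_trans ht2.le hx.2⟩
      have hlt2 : N x < N t := hs htI hx ht2
      have h0 : C t (N x) = 0 := conj_eq_zero_of_lt C hC htI hNx hlt2
      have h1 : C (N x) t = 0 := by rw [hcomm (N x) hNx t htI]; exact h0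
      have := le_natNegC C htI h1
      linarith
    -- N (N x) ≤ x
    have hle : N (N x) ≤ x := by
      by_contra hlt
      push_neg at hlt
      set t := (x + N (N x)) / 2 with htdef
      have ht1 : x < t := by simp only [htdef]; linarith
      have ht2 : t < N (N x) := by simp only [htdef]; linarith
      have htI : t ∈ unitI := ⟨le_trans hx.1 ht1.le, le_trans ht2.le hNNx.2⟩
      have h0 : C (N x) t = 0 := conj_eq_zero_of_lt C hC hNx htI ht2
      have h1 : C t (N x) = 0 := by rw [hcomm t htI (N x) hNx]; exact h0
      have hle2 : N x ≤ N t := le_natNegC C hNx h1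
      have : N t < N x := hs hx htI ht1
      linarith
    linarith
  -- 4 → 1
  tfae_have 4 → 1
  | hinv => by
    intro x hx y hy hxy
    have h1 : N y ≤ N x := hanti x hx y hy hxy.le
    rcases lt_or_eq_of_le h1 with h | h
    · exact h
    · exfalso
      have : x = y := by
        have := hinv x hx
        have := hinv y hy
        rw [← hinv x hx, ← hinv y hy, h]
      exact absurd this hxy.ne
  -- 4 → 2 (using 4 → 1 to get strictness, then monotone continuity lemmas)
  tfae_have 4 → 2
  | hinv => by
    have hs : StrictAntiOn N unitI := tfae_4_to_1 hinv
    intro a ha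
    -- right continuity when a < 1
    have hright : a < 1 → ContinuousWithinAt N (Ici a) a := by
      intro ha1
      have hmono : StrictMonoOn (fun x => OrderDual.toDual (N x)) unitI := by
        intro x hx y hy hxy
        exact hs hx hy hxy
      have hnb : unitI ∈ nhdsWithin a (Ici a) := by
        have := Icc_mem_nhdsGE_of_mem (show a ∈ Ico (0:ℝ) 1 from ⟨ha.1, ha1⟩)
        simpa [unitI] using this
      have hNa0 : 0 < N a := by
        have := hs ha unit_one ha1
        rw [hN1] at this
        exact this
      have hfs : ∀ b, OrderDual.toDual (N a) < b →
          ∃ c ∈ unitI, (fun x => OrderDual.toDual (N x)) c ∈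
            Ioc (OrderDual.toDual (N a)) b := by
        intro b hb
        have hb' : OrderDual.ofDual b < N a := hb
        set v := max (OrderDual.ofDual b) 0 with hv
        have hv1 : v < N a := max_lt hb' hNa0
        have hvI : v ∈ unitI := ⟨le_max_right _ _, le_trans hv1.le (hmem a ha).2⟩
        refine ⟨N v, hmem v hvI, ?_, ?_⟩
        · show N (N v) < N a
          rw [hinv v hvI]; exact hv1
        · show OrderDual.ofDual b ≤ N (N v)
          rw [hinv v hvI]; exact le_max_left _ _
      exact hmono.continuousWithinAt_right_of_exists_between hnb hfs
    -- left continuity when 0 < a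
    have hleft : 0 < a → ContinuousWithinAt N (Iic a) a := by
      intro ha0
      have hmono : StrictMonoOn (fun x => OrderDual.toDual (N x)) unitI := by
        intro x hx y hy hxy
        exact hs hx hy hxy
      have hnb : unitI ∈ nhdsWithin a (Iic a) := by
        have := Icc_mem_nhdsLE_of_mem (show a ∈ Ioc (0:ℝ) 1 from ⟨ha0, ha.2⟩)
        simpa [unitI] using this
      have hNa1 : N a < 1 := by
        have := hs unit_zero ha ha0
        rw [hN0] at this
        exact this
      have hfs : ∀ b, b < OrderDual.toDual (N a) →
          ∃ c ∈ unitI, (fun x => OrderDual.toDual (N x)) c ∈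
            Ico b (OrderDual.toDual (N a)) := by
        intro b hb
        have hb' : N a < OrderDual.ofDual b := hb
        set v := min (OrderDual.ofDual b) 1 with hv
        have hv1 : N a < v := lt_min hb' hNa1
        have hvI : v ∈ unitI := ⟨le_trans (hmem a ha).1 hv1.le, min_le_right _ _⟩
        refine ⟨N v, hmem v hvI, ?_, ?_⟩
        · show N (N v) ≤ OrderDual.ofDual b
          rw [hinv v hvI]; exact min_le_left _ _
        · show N a < N (N v)
          rw [hinv v hvI]; exact hv1
      exact hmono.continuousWithinAt_left_of_exists_between hnb hfs
    have hL : ContinuousWithinAt N (unitI ∩ Iic a) a := by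
      rcases eq_or_lt_of_le ha.1 with h | h
      · refine (continuousWithinAt_singleton (f := N) (x := a)).mono ?_
        rintro x ⟨hx1, hx2⟩
        have : x = a := le_antisymm hx2 (h ▸ hx1.1)
        simp [this]
      · exact (hleft h).mono inter_subset_right
    have hR : ContinuousWithinAt N (unitI ∩ Ici a) a := by
      rcases eq_or_lt_of_le ha.2 with h | h
      · refine (continuousWithinAt_singleton (f := N) (x := a)).mono ?_
        rintro x ⟨hx1, hx2⟩
        have : x = a := le_antisymm (h ▸ hx1.2) hx2
        simp [this]
      · exact (hright h).mono inter_subset_right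
    refine (hL.union hR).mono ?_
    intro x hx
    rcases le_total x a with h | h
    · exact Or.inl ⟨hx, h⟩
    · exact Or.inr ⟨hx, h⟩
  -- 2 → 1
  tfae_have 2 → 1
  | hc => by
    intro a ha b hb hab
    have h1 : N b ≤ N a := hanti a ha b hb hab.le
    rcases lt_or_eq_of_le h1 with h | h
    · exact h
    exfalso
    set c := N a with hcdef
    have hcb : N b = c := h
    have hcI : c ∈ unitI := hmem a ha
    -- F1 : y < c → b ≤ N y
    have F1 : ∀ y ∈ unitI, y < c → b ≤ N y := by
      intro y hy hyc
      have hyc' : y < N b := by rw [hcb]; exact hyc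
      have h0 : C b y = 0 := conj_eq_zero_of_lt C hC hb hy hyc'
      have h1 : C y b = 0 := by rw [hcomm y hy b hb]; exact h0
      exact le_natNegC C hb h1
    -- F2 : c < y → N y ≤ a
    have F2 : ∀ y ∈ unitI, c < y → N y ≤ a := by
      intro y hy hcy
      by_contra hlt
      push_neg at hlt
      have hne : Set.Nonempty {t | t ∈ unitI ∧ C y t = 0} :=
        ⟨0, unit_zero, conj_zero_right C hC hy⟩
      obtain ⟨s, hsmem, has⟩ := exists_lt_of_lt_csSup hne hlt
      have h0 : C y a = 0 := by
        have hle : C y a ≤ C y s := hC.2.2.1 y hy a ha s hsmem.1 has.le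
        have hge : 0 ≤ C y a := (hC.1 y hy a ha).1
        have := hsmem.2
        linarith
      have h1 : C a y = 0 := by rw [hcomm a ha y hy]; exact h0
      have h2 : y ≤ c := le_natNegC C hy h1
      linarith
    have hcw : ContinuousWithinAt N unitI c := hc c hcI
    -- if c < 1, then N c ≤ a via right limit
    have hNca : c < 1 → N c ≤ a := by
      intro hc1
      have hne : (nhdsWithin c (Ioo c 1)).NeBot := left_nhdsWithin_Ioo_neBot hc1
      have hsub : Ioo c 1 ⊆ unitI := fun x hx => ⟨le_trans hcI.1 hx.1.le, hx.2.le⟩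
      have htd : Filter.Tendsto N (nhdsWithin c (Ioo c 1)) (nhds (N c)) :=
        (hcw.mono hsub)
      refine le_of_tendsto htd ?_
      filter_upwards [self_mem_nhdsWithin] with x hx
      exact F2 x (hsub hx) hx.1
    -- if 0 < c, then b ≤ N c via left limit
    have hbNc : 0 < c → b ≤ N c := by
      intro hc0
      have hne : (nhdsWithin c (Ioo 0 c)).NeBot := right_nhdsWithin_Ioo_neBot hc0
      have hsub : Ioo 0 c ⊆ unitI := fun x hx => ⟨hx.1.le, le_trans hx.2.le hcI.2⟩
      have htd : Filter.Tendsto N (nhdsWithin c (Ioo 0 c)) (nhds (N c)) :=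
        (hcw.mono hsub)
      refine ge_of_tendsto htd ?_
      filter_upwards [self_mem_nhdsWithin] with x hx
      exact F1 x (hsub hx) hx.2
    rcases eq_or_lt_of_le hcI.1 with h0 | h0
    · -- c = 0 : N c = N 0 = 1 ≤ a, contradiction with a < b ≤ 1
      have := hNca (by rw [← h0]; norm_num)
      rw [← h0, hN0] at this
      have := hb.2
      linarith
    rcases eq_or_lt_of_le hcI.2 with h1 | h1
    · -- c = 1 : b ≤ N 1 = 0, contradiction with 0 ≤ a < b
      have := hbNc (by rw [h1]; norm_num)
      rw [h1, hN1] at this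
      have := ha.1
      linarith
    · have := hNca h1
      have := hbNc h0
      linarith
  -- trivial links through 3
  tfae_have 3 → 1
  | h => h.2
  tfae_have 1 → 3
  | h => ⟨tfae_4_to_2 (tfae_1_to_4 h), h⟩
  tfae_finish
end

section
/- If D : [0,1]² → [0,1] is a fuzzy disjunction that is right-continuous in the second variable, then for all x, y ∈ [0,1], D(x,y) = 1 if and only if N_D(x) ≤ y, where N_D(x) = inf{t ∈ [0,1] : D(x,t) = 1}. -/
open Set

theorem stmt_7 (D : ℝ → ℝ → ℝ) (hD : IsFuzzyDisj D)
    (hrc : ∀ x ∈ unitI, ∀ y ∈ unitI,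
      ContinuousWithinAt (fun t => D x t) (Set.Ici y) y) :
    ∀ x ∈ unitI, ∀ y ∈ unitI, D x y = 1 ↔ natNegD D x ≤ y := by
  obtain ⟨hmem, hmono1, hmono2, h00, h11, h10, h01⟩ := hD
  intro x hx y hy
  set S := {t | t ∈ unitI ∧ D x t = 1} with hS
  have h1S : (1 : ℝ) ∈ S := by
    refine ⟨⟨zero_le_one, le_refl 1⟩, ?_⟩
    have h1 : D x 1 ≤ 1 := (hmem x hx 1 ⟨zero_le_one, le_refl 1⟩).2
    have h3 : D 0 1 ≤ D x 1 :=
      hmono1 1 ⟨zero_le_one, le_refl 1⟩ 0 ⟨le_refl 0, zero_le_one⟩ x hx hx.1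
    linarith
  have hSne : S.Nonempty := ⟨1, h1S⟩
  have hbdd : BddBelow S := ⟨0, fun t ht => ht.1.1⟩
  have ha0 : 0 ≤ sInf S := le_csInf hSne (fun t ht => ht.1.1)
  have ha1 : sInf S ≤ 1 := csInf_le hbdd h1S
  have hnat : natNegD D x = sInf S := rfl
  rw [hnat]
  constructor
  · intro h
    exact csInf_le hbdd ⟨hy, h⟩
  · intro h
    have key : D x (sInf S) = 1 := by
      rcases eq_or_lt_of_le ha1 with heq | hlt
      · rw [heq]; exact h1S.2
      · have hfa : ∀ t ∈ Set.Ioc (sInf S) 1, D x t = 1 := by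
          intro t ht
          obtain ⟨s, hsS, hst⟩ := exists_lt_of_csInf_lt hSne ht.1
          have htI : t ∈ unitI := ⟨le_trans hsS.1.1 hst.le, ht.2⟩
          have h1 : D x s ≤ D x t := hmono2 x hx s hsS.1 t htI hst.le
          have h2 := (hmem x hx t htI).2
          have := hsS.2
          linarith
        have hc := hrc x hx (sInf S) ⟨ha0, ha1⟩
        have hc' : Filter.Tendsto (fun t => D x t)
            (nhdsWithin (sInf S) (Set.Ioi (sInf S))) (nhds (D x (sInf S))) :=
          hc.mono_left (nhdsWithin_mono _ Set.Ioi_subset_Ici_self)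
        have heq : (fun t => D x t) =ᶠ[nhdsWithin (sInf S) (Set.Ioi (sInf S))]
            (fun _ => (1:ℝ)) := by
          filter_upwards [Ioc_mem_nhdsGT_of_mem ⟨le_refl _, hlt⟩] with t ht
            using hfa t ht
        have hc2 : Filter.Tendsto (fun t => D x t)
            (nhdsWithin (sInf S) (Set.Ioi (sInf S))) (nhds 1) :=
          Filter.Tendsto.congr' heq.symm tendsto_const_nhds
        exact tendsto_nhds_unique hc' hc2
    have h1 : D x (sInf S) ≤ D x y := hmono2 x hx (sInf S) ⟨ha0, ha1⟩ y hy h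
    have h2 := (hmem x hx y hy).2
    linarith
end

section
/- Let D be a commutative fuzzy disjunction whose natural negation N_D is a fuzzy negation. Then the following are equivalent: (i) N_D is strictly decreasing; (ii) N_D is continuous; (iii) N_D is strict; (iv) N_D is strong (i.e., N_D(N_D(x)) = x for all x). -/
open Set

theorem stmt_9 (D : ℝ → ℝ → ℝ) (hD : IsFuzzyDisj D)
    (hcomm : ∀ x ∈ unitI, ∀ y ∈ unitI, D x y = D y x)
    (hN : IsFuzzyNeg (natNegD D)) :
    List.TFAE [StrictAntiOn (natNegD D) unitI,
      ContinuousOn (natNegD D) unitI,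
      ContinuousOn (natNegD D) unitI ∧ StrictAntiOn (natNegD D) unitI,
      ∀ x ∈ unitI, natNegD D (natNegD D x) = x] := by
  obtain ⟨hrange, hm1, hm2, h00, h11, h10, h01⟩ := hD
  obtain ⟨hNrange, hN0, hN1, hNanti⟩ := hN
  set N := natNegD D with hNdef
  have h0u : (0:ℝ) ∈ unitI := ⟨le_refl 0, zero_le_one⟩
  have h1u : (1:ℝ) ∈ unitI := ⟨zero_le_one, le_refl 1⟩
  have hDx1 : ∀ x ∈ unitI, D x 1 = 1 := by
    intro x hx
    refine le_antisymm (hrange x hx 1 h1u).2 ?_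
    have h := hm1 1 h1u 0 h0u x hx hx.1
    rwa [h01] at h
  have hSne : ∀ x ∈ unitI, Set.Nonempty {t | t ∈ unitI ∧ D x t = 1} :=
    fun x hx => ⟨1, h1u, hDx1 x hx⟩
  have hSbdd : ∀ x : ℝ, BddBelow {t | t ∈ unitI ∧ D x t = 1} :=
    fun x => ⟨0, fun t ht => ht.1.1⟩
  have hDlt : ∀ x ∈ unitI, ∀ t ∈ unitI, t < N x → D x t ≠ 1 := by
    intro x hx t ht hlt heq
    have : N x ≤ t := csInf_le (hSbdd x) ⟨ht, heq⟩
    exact absurd this (not_le.mpr hlt)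
  have hDeq : ∀ x ∈ unitI, ∀ t ∈ unitI, N x < t → D x t = 1 := by
    intro x hx t ht hlt
    obtain ⟨s, hs, hst⟩ := exists_lt_of_csInf_lt (hSne x hx) hlt
    refine le_antisymm (hrange x hx t ht).2 ?_
    have h := hm2 x hx s hs.1 t ht hst.le
    rw [hs.2] at h
    exact h
  have key1 : ∀ x ∈ unitI, ∀ y ∈ unitI, y < N x → x ≤ N y := by
    intro x hx y hy hlt
    by_contra h
    push_neg at h
    have h2 := hDeq y hy x hx h
    rw [hcomm y hy x hx] at h2
    exact hDlt x hx y hy hlt h2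
  -- (1) → (4)
  have h14 : StrictAntiOn N unitI → ∀ x ∈ unitI, N (N x) = x := by
    intro hSA x hx
    have hNx := hNrange x hx
    have hge : x ≤ N (N x) := by
      apply le_csInf (hSne _ hNx)
      intro t ht
      have hDt : D t (N x) = 1 := by
        rw [hcomm t ht.1 (N x) hNx]; exact ht.2
      have hle : N t ≤ N x := not_lt.mp (fun h => hDlt t ht.1 (N x) hNx h hDt)
      by_contra hc
      push_neg at hc
      exact absurd hle (not_le.mpr (hSA ht.1 hx hc))
    have hle : N (N x) ≤ x := by
      by_contra hc
      push_neg at hc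
      have hNNx := hNrange _ hNx
      set t := (x + N (N x)) / 2 with htdef
      have ht1 : x < t := by simp only [htdef]; linarith
      have ht2 : t < N (N x) := by simp only [htdef]; linarith
      have htu : t ∈ unitI := ⟨le_trans hx.1 ht1.le, le_trans ht2.le hNNx.2⟩
      have hNt : N t < N x := hSA hx htu ht1
      have hD1 : D (N x) t = 1 := by
        have h := hDeq t htu (N x) hNx hNt
        rw [hcomm t htu (N x) hNx] at h
        exact h
      have : N (N x) ≤ t := csInf_le (hSbdd _) ⟨htu, hD1⟩
      linarith
    linarith
  -- (4) → (1)
  have h41 : (∀ x ∈ unitI, N (N x) = x) → StrictAntiOn N unitI := by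
    intro hinv x hx y hy hxy
    rcases lt_or_eq_of_le (hNanti x hx y hy hxy.le) with h | h
    · exact h
    · exfalso
      have hx' := hinv x hx
      have hy' := hinv y hy
      rw [← h] at hx'
      exact (ne_of_lt hxy) (hx'.symm.trans hy')
  -- (4) → (2)
  have h42 : (∀ x ∈ unitI, N (N x) = x) → ContinuousOn N unitI := by
    intro hinv
    let f : Icc (0:ℝ) 1 → (Icc (0:ℝ) 1)ᵒᵈ :=
      fun x => OrderDual.toDual ⟨N x, hNrange x x.2⟩
    have hmono : Monotone f := by
      intro a b hab
      show N b ≤ N a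
      exact hNanti a a.2 b b.2 hab
    have hsurj : Function.Surjective f := by
      intro y
      refine ⟨⟨N (OrderDual.ofDual y).1, hNrange _ (OrderDual.ofDual y).2⟩, ?_⟩
      apply Subtype.ext
      exact hinv (OrderDual.ofDual y).1 (OrderDual.ofDual y).2
    have hcont : Continuous f := hmono.continuous_of_surjective hsurj
    have : ContinuousOn N (Icc (0:ℝ) 1) := by
      rw [continuousOn_iff_continuous_restrict]
      exact continuous_subtype_val.comp hcont
    exact this
  -- (2) → (1)
  have h21 : ContinuousOn N unitI → StrictAntiOn N unitI := by
    intro hcont a ha b hb hab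
    rcases lt_or_eq_of_le (hNanti a ha b hb hab.le) with h | h
    · exact h
    · exfalso
      -- N a = N b =: c
      have hsurj : Icc (N 1) (N 0) ⊆ N '' Icc 0 1 :=
        intermediate_value_Icc' zero_le_one hcont
      rw [hN0, hN1] at hsurj
      set m₁ := a + (b - a) / 3 with hm₁
      set m₂ := a + 2 * (b - a) / 3 with hm₂
      have hm₁ab : a < m₁ ∧ m₁ < b := by constructor <;> [skip; skip] <;> simp only [hm₁] <;> linarith
      have hm₂ab : a < m₂ ∧ m₂ < b := by constructor <;> simp only [hm₂] <;> linarith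
      have hm₁u : m₁ ∈ unitI := ⟨le_trans ha.1 hm₁ab.1.le, le_trans hm₁ab.2.le hb.2⟩
      have hm₂u : m₂ ∈ unitI := ⟨le_trans ha.1 hm₂ab.1.le, le_trans hm₂ab.2.le hb.2⟩
      have hne : m₁ ≠ m₂ := by simp only [hm₁, hm₂]; intro hcontra; linarith [hab]
      -- for any m in (a,b), the point y with N y = m equals N a
      have key : ∀ m, a < m → m < b → m ∈ unitI → N (N a) = m := by
        intro m hma hmb hmu
        obtain ⟨y, hyu, hym⟩ := hsurj hmu
        have hy1 : y ≤ N a := by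
          apply key1 y hyu a ha
          rw [hym]; exact hma
        have hy2 : N a ≤ y := by
          by_contra hc
          push_neg at hc
          rw [← h] at hc
          have := key1 b hb y hyu hc
          rw [hym] at this
          linarith
        have : y = N a := le_antisymm hy1 hy2
        rw [← this, hym]
      have e1 := key m₁ hm₁ab.1 hm₁ab.2 hm₁u
      have e2 := key m₂ hm₂ab.1 hm₂ab.2 hm₂u
      exact hne (e1.symm.trans e2)
  tfae_have 1 → 4 := h14
  tfae_have 4 → 2 := h42
  tfae_have 2 → 1 := h21
  tfae_have 3 → 2 := And.left
  tfae_have 1 → 3 := fun h => ⟨h42 (h14 h), h⟩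
  tfae_finish
end

section
/- Let D be a fuzzy disjunction and N a fuzzy negation. If the pair (D,N) satisfies the law of excluded middle (i.e., D(N(x),x) = 1 and D(x,N(x)) = 1 for all x ∈ [0,1]), then N_D(N(x)) ≤ x and N(x) ≥ N_D(x) for all x ∈ [0,1], where N_D(x) = inf{t ∈ [0,1] : D(x,t) = 1}. -/
open Set

theorem stmt_10 (D : ℝ → ℝ → ℝ) (N : ℝ → ℝ)
    (hD : IsFuzzyDisj D) (hN : IsFuzzyNeg N)
    (hlem : ∀ x ∈ unitI, D (N x) x = 1 ∧ D x (N x) = 1) :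
    ∀ x ∈ unitI, natNegD D (N x) ≤ x ∧ natNegD D x ≤ N x := by
  intro x hx
  have hNx : N x ∈ unitI := hN.1 x hx
  have hbdd : ∀ z : ℝ, BddBelow {t | t ∈ unitI ∧ D z t = 1} := by
    intro z
    exact ⟨0, fun t ht => ht.1.1⟩
  constructor
  · exact csInf_le (hbdd _) ⟨hx, (hlem x hx).1⟩
  · exact csInf_le (hbdd _) ⟨hNx, (hlem x hx).2⟩
end

section
/- Let D be a fuzzy disjunction that is right-continuous in the second variable, and N a fuzzy negation. Then the pair (D,N) satisfies the law of excluded middle (D(N(x),x) = 1 and D(x,N(x)) = 1 for all x) if and only if N_D(N(x)) ≤ x and N(x) ≥ N_D(x) for all x ∈ [0,1]. -/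
open Set

lemma natNegD_key (D : ℝ → ℝ → ℝ) (hD : IsFuzzyDisj D)
    (hrc : ∀ x ∈ unitI, ∀ y ∈ unitI,
      ContinuousWithinAt (fun t => D x t) (Set.Ici y) y)
    (x : ℝ) (hx : x ∈ unitI) (y : ℝ) (hy : y ∈ unitI) (h : natNegD D x ≤ y) :
    D x y = 1 := by
  obtain ⟨hrange, hmono1, hmono2, h00, h11, h10, h01⟩ := hD
  have h1u : (1 : ℝ) ∈ unitI := ⟨zero_le_one, le_refl 1⟩
  have hx1 : D x 1 = 1 := by
    have hle := hmono1 1 h1u 0 (by constructor <;> norm_num) x hx hx.1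
    rw [h01] at hle
    exact le_antisymm (hrange x hx 1 h1u).2 hle
  set S := {t | t ∈ unitI ∧ D x t = 1} with hS
  have hne : S.Nonempty := ⟨1, h1u, hx1⟩
  have hbdd : BddBelow S := ⟨0, fun t ht => ht.1.1⟩
  have hm0 : 0 ≤ natNegD D x := le_csInf hne fun t ht => ht.1.1
  have hm1 : natNegD D x ≤ 1 := csInf_le hbdd ⟨h1u, hx1⟩
  set m := natNegD D x with hmdef
  rcases lt_or_eq_of_le hm1 with hmlt | hmeq
  · -- m < 1 : show D x m = 1 via right continuity
    have hub : ∀ t, m < t → t ≤ 1 → D x t = 1 := by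
      intro t hmt ht1
      obtain ⟨s, hsS, hst⟩ := exists_lt_of_csInf_lt hne hmt
      have : D x s ≤ D x t :=
        hmono2 x hx s hsS.1 t ⟨le_trans hsS.1.1 hst.le, ht1⟩ hst.le
      rw [hsS.2] at this
      exact le_antisymm (hrange x hx t ⟨le_trans hsS.1.1 hst.le, ht1⟩).2 this
    have hcw := hrc x hx m ⟨hm0, hm1⟩
    have h2 : Filter.Tendsto (fun t => D x t) (nhdsWithin m (Set.Ioi m)) (nhds (D x m)) :=
      hcw.tendsto.mono_left (nhdsWithin_mono m Set.Ioi_subset_Ici_self)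
    have hev : ∀ᶠ t in nhdsWithin m (Set.Ioi m), D x t = 1 := by
      filter_upwards [Ioo_mem_nhdsGT_of_mem ⟨le_refl m, hmlt⟩] with t ht
      exact hub t ht.1 ht.2.le
    have h3 : Filter.Tendsto (fun t => D x t) (nhdsWithin m (Set.Ioi m)) (nhds 1) :=
      Filter.Tendsto.congr' (hev.mono fun t h => h.symm) tendsto_const_nhds
    have hDm : D x m = 1 := tendsto_nhds_unique h2 h3
    have : D x m ≤ D x y := hmono2 x hx m ⟨hm0, hm1⟩ y hy h
    rw [hDm] at this
    exact le_antisymm (hrange x hx y hy).2 this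
  · -- m = 1 : then y = 1
    have hy1 : y = 1 := le_antisymm hy.2 (hmeq ▸ h)
    rw [hy1]; exact hx1

theorem stmt_11 (D : ℝ → ℝ → ℝ) (N : ℝ → ℝ)
    (hD : IsFuzzyDisj D) (hN : IsFuzzyNeg N)
    (hrc : ∀ x ∈ unitI, ∀ y ∈ unitI,
      ContinuousWithinAt (fun t => D x t) (Set.Ici y) y) :
    (∀ x ∈ unitI, D (N x) x = 1 ∧ D x (N x) = 1) ↔
      (∀ x ∈ unitI, natNegD D (N x) ≤ x ∧ natNegD D x ≤ N x) := by
  have hbdd : ∀ z : ℝ, BddBelow {t | t ∈ unitI ∧ D z t = 1} :=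
    fun z => ⟨0, fun t ht => ht.1.1⟩
  constructor
  · intro h x hx
    obtain ⟨h1, h2⟩ := h x hx
    exact ⟨csInf_le (hbdd _) ⟨hx, h1⟩, csInf_le (hbdd _) ⟨hN.1 x hx, h2⟩⟩
  · intro h x hx
    obtain ⟨h1, h2⟩ := h x hx
    exact ⟨natNegD_key D hD hrc (N x) (hN.1 x hx) x hx h1,
           natNegD_key D hD hrc x hx (N x) (hN.1 x hx) h2⟩
end

section
/- Let C be a fuzzy conjunction and N a fuzzy negation. If the pair (C,N) satisfies the law of contradiction (C(N(x),x) = 0 and C(x,N(x)) = 0 for all x ∈ [0,1]), then N_C(N(x)) ≥ x and N(x) ≤ N_C(x) for all x ∈ [0,1], where N_C(x) = sup{t ∈ [0,1] : C(x,t) = 0}. -/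
open Set

theorem stmt_12 (C : ℝ → ℝ → ℝ) (N : ℝ → ℝ)
    (hC : IsFuzzyConj C) (hN : IsFuzzyNeg N)
    (hlc : ∀ x ∈ unitI, C (N x) x = 0 ∧ C x (N x) = 0) :
    ∀ x ∈ unitI, x ≤ natNegC C (N x) ∧ N x ≤ natNegC C x := by
  intro x hx
  have hbdd : ∀ a : ℝ, BddAbove {t | t ∈ unitI ∧ C a t = 0} :=
    fun a => ⟨1, fun t ht => ht.1.2⟩
  constructor
  · exact le_csSup (hbdd _) ⟨hx, (hlc x hx).1⟩
  · exact le_csSup (hbdd _) ⟨hN.1 x hx, (hlc x hx).2⟩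
end

section
/- A function I : [0,1]² → [0,1] is a (D,N)-implication I(x,y) = D(N(x),y) for some strict fuzzy negation N and some fuzzy disjunction D with right neutral element 0 (D(x,0) = x for all x) if and only if I is a fuzzy implication and the map N_I(x) = I(x,0) is a strict fuzzy negation. -/
open Set

theorem stmt_18 (I : ℝ → ℝ → ℝ) :
    (∃ D N, IsFuzzyDisj D ∧ IsFuzzyNeg N ∧ ContinuousOn N unitI ∧
        StrictAntiOn N unitI ∧ (∀ x ∈ unitI, D x 0 = x) ∧
        ∀ x ∈ unitI, ∀ y ∈ unitI, I x y = D (N x) y) ↔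
      (IsFuzzyImpl I ∧ IsFuzzyNeg (fun x => I x 0) ∧
        ContinuousOn (fun x => I x 0) unitI ∧
        StrictAntiOn (fun x => I x 0) unitI) := by
  have h0 : (0:ℝ) ∈ unitI := ⟨le_refl 0, zero_le_one⟩
  have h1 : (1:ℝ) ∈ unitI := ⟨zero_le_one, le_refl 1⟩
  constructor
  · rintro ⟨D, N, ⟨Dr, Dm1, Dm2, D00, D11, D10, D01⟩, ⟨Nr, N0, N1, Na⟩, hNc, hNa, hD0, hI⟩
    have hNI : ∀ x ∈ unitI, I x 0 = N x := fun x hx => by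
      rw [hI x hx 0 h0, hD0 (N x) (Nr x hx)]
    have i00 : I 0 0 = 1 := by rw [hI 0 h0 0 h0, N0, D10]
    have i11 : I 1 1 = 1 := by rw [hI 1 h1 1 h1, N1, D01]
    have i10 : I 1 0 = 0 := by rw [hI 1 h1 0 h0, N1, D00]
    refine ⟨⟨?_, ?_, ?_, i00, i11, i10⟩, ⟨?_, ?_, ?_, ?_⟩, ?_, ?_⟩
    · intro x hx y hy; rw [hI x hx y hy]; exact Dr _ (Nr x hx) y hy
    · intro y hy x₁ hx₁ x₂ hx₂ hle
      rw [hI x₁ hx₁ y hy, hI x₂ hx₂ y hy]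
      exact Dm1 y hy _ (Nr x₂ hx₂) _ (Nr x₁ hx₁) (Na x₁ hx₁ x₂ hx₂ hle)
    · intro x hx y₁ hy₁ y₂ hy₂ hle
      rw [hI x hx y₁ hy₁, hI x hx y₂ hy₂]
      exact Dm2 _ (Nr x hx) y₁ hy₁ y₂ hy₂ hle
    · intro x hx; simp only; rw [hNI x hx]; exact Nr x hx
    · simpa using i00
    · simpa using i10
    · intro x hx y hy hle; simp only; rw [hNI x hx, hNI y hy]; exact Na x hx y hy hle
    · exact hNc.congr (fun x hx => hNI x hx)
    · intro x hx y hy hxy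
      simp only; rw [hNI x hx, hNI y hy]; exact hNa hx hy hxy
  · rintro ⟨⟨Ir, Im1, Im2, i00, i11, i10⟩, ⟨Nr, N0, N1, Na⟩, hNc, hNa⟩
    simp only at Nr N0 N1 Na
    have hinj : Set.InjOn (fun x => I x 0) unitI := hNa.injOn
    have hsurj : ∀ a ∈ unitI, ∃ x ∈ unitI, I x 0 = a := by
      intro a ha
      have h := intermediate_value_Icc' (zero_le_one) hNc
      have ha' : a ∈ Icc (I 1 0) (I 0 0) := by rw [i10, i00]; exact ha
      obtain ⟨x, hx, hxa⟩ := h ha'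
      exact ⟨x, hx, hxa⟩
    classical
    set g : ℝ → ℝ := fun a => if h : ∃ x ∈ unitI, I x 0 = a then h.choose else 0 with hgdef
    have hg1 : ∀ a ∈ unitI, g a ∈ unitI ∧ I (g a) 0 = a := by
      intro a ha
      have h := hsurj a ha
      simp only [hgdef, dif_pos h]
      exact ⟨h.choose_spec.1, h.choose_spec.2⟩
    have hgN : ∀ x ∈ unitI, g (I x 0) = x := by
      intro x hx
      obtain ⟨hm, he⟩ := hg1 _ (Nr x hx)
      exact hinj hm hx he
    have hg0 : g 0 = 1 := by
      obtain ⟨hm, he⟩ := hg1 0 h0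
      exact hinj hm h1 (by simpa [i10] using he)
    have hg1' : g 1 = 0 := by
      obtain ⟨hm, he⟩ := hg1 1 h1
      exact hinj hm h0 (by simpa [i00] using he)
    have hganti : ∀ a ∈ unitI, ∀ b ∈ unitI, a ≤ b → g b ≤ g a := by
      intro a ha b hb hab
      by_contra hlt
      push_neg at hlt
      have := hNa (hg1 a ha).1 (hg1 b hb).1 hlt
      simp only [(hg1 a ha).2, (hg1 b hb).2] at this
      exact absurd hab (not_le.mpr this)
    have i01 : I 0 1 = 1 := le_antisymm (Ir 0 h0 1 h1).2
      (by calc (1:ℝ) = I 0 0 := i00.symm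
            _ ≤ I 0 1 := Im2 0 h0 0 h0 1 h1 zero_le_one)
    refine ⟨fun a b => I (g a) b, fun x => I x 0, ⟨?_, ?_, ?_, ?_, ?_, ?_, ?_⟩,
      ⟨Nr, N0, N1, Na⟩, hNc, hNa, ?_, ?_⟩
    · intro a ha b hb; exact Ir _ (hg1 a ha).1 b hb
    · intro y hy a₁ ha₁ a₂ ha₂ hle
      exact Im1 y hy _ (hg1 a₂ ha₂).1 _ (hg1 a₁ ha₁).1 (hganti a₁ ha₁ a₂ ha₂ hle)
    · intro a ha y₁ hy₁ y₂ hy₂ hle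
      exact Im2 _ (hg1 a ha).1 y₁ hy₁ y₂ hy₂ hle
    · show I (g 0) 0 = 0; rw [hg0, i10]
    · show I (g 1) 1 = 1; rw [hg1', i01]
    · show I (g 1) 0 = 1; rw [hg1', i00]
    · show I (g 0) 1 = 1; rw [hg0, i11]
    · intro x hx; exact (hg1 x hx).2
    · intro x hx y hy; show I x y = I (g (I x 0)) y; rw [hgN x hx]
end

section
/- If N : [0,1] → [0,1] is a continuous fuzzy negation and ℵ : [0,1] → [0,1] is defined by ℵ(0) = 1 and ℵ(x) = sup{t ∈ [0,1] : N(t) > x} for x ∈ (0,1], then ℵ is a strictly decreasing fuzzy negation, N(ℵ(x)) = x for all x ∈ [0,1], and ℵ(N(x)) = x for every x in the range of ℵ. -/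
open Set

theorem stmt_19 (N : ℝ → ℝ) (hN : IsFuzzyNeg N) (hcont : ContinuousOn N unitI)
    (aleph : ℝ → ℝ) (h0 : aleph 0 = 1)
    (hdef : ∀ x ∈ Set.Ioc (0:ℝ) 1, aleph x = sSup {t | t ∈ unitI ∧ N t > x}) :
    IsFuzzyNeg aleph ∧ StrictAntiOn aleph unitI ∧
      (∀ x ∈ unitI, N (aleph x) = x) ∧
      (∀ x : ℝ, (∃ y ∈ unitI, aleph y = x) → aleph (N x) = x) := by
  obtain ⟨hmemN, hN0, hN1, hantiN⟩ := hN
  have h01 : (0:ℝ) ∈ unitI := by constructor <;> norm_num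
  have h11 : (1:ℝ) ∈ unitI := by constructor <;> norm_num
  have h1 : aleph 1 = 0 := by
    rw [hdef 1 (by constructor <;> norm_num)]
    convert Real.sSup_empty using 2
    ext t
    simp only [Set.mem_setOf_eq, Set.mem_empty_iff_false, iff_false, not_and, not_lt]
    intro ht; exact (hmemN t ht).2
  have hbdd : ∀ x : ℝ, BddAbove {t | t ∈ unitI ∧ N t > x} := fun x => ⟨1, fun t ht => ht.1.2⟩
  have hmem : ∀ x ∈ unitI, aleph x ∈ unitI := by
    intro x hx
    rcases eq_or_lt_of_le hx.1 with h | h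
    · rw [← h, h0]; exact h11
    · rw [hdef x ⟨h, hx.2⟩]
      exact ⟨Real.sSup_nonneg (fun t ht => ht.1.1),
        Real.sSup_le (fun t ht => ht.1.2) zero_le_one⟩
  have key : ∀ x ∈ unitI, N (aleph x) = x := by
    intro x hx
    rcases eq_or_lt_of_le hx.1 with h | hx0
    · rw [← h, h0, hN1]
    rcases eq_or_lt_of_le hx.2 with h | hx1
    · rw [h, h1, hN0]
    have hdx := hdef x ⟨hx0, hx.2⟩
    set S := {t | t ∈ unitI ∧ N t > x} with hS
    have hS0 : (0:ℝ) ∈ S := ⟨h01, by show x < N 0; rw [hN0]; exact hx1⟩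
    have hSne : S.Nonempty := ⟨0, hS0⟩
    set a := sSup S with ha
    have haI : a ∈ unitI := ⟨le_csSup (hbdd x) hS0, csSup_le hSne (fun t ht => ht.1.2)⟩
    have hcw : ContinuousWithinAt N unitI a := hcont a haI
    rw [hdx]
    by_contra hne
    rcases lt_or_gt_of_ne hne with hlt | hgt
    · have hev : {t | N t < x} ∈ nhdsWithin a unitI := hcw (Iio_mem_nhds hlt)
      rcases mem_nhdsWithin.1 hev with ⟨U, hUo, haU, hU⟩
      rcases Metric.isOpen_iff.1 hUo a haU with ⟨δ, hδ, hball⟩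
      obtain ⟨t, htS, htgt⟩ := exists_lt_of_lt_csSup hSne (by linarith : a - δ < a)
      have htle : t ≤ a := le_csSup (hbdd x) htS
      have htU : t ∈ U := hball (by
        rw [Metric.mem_ball, Real.dist_eq, abs_lt]; constructor <;> linarith)
      have := hU ⟨htU, htS.1⟩
      exact absurd htS.2 (not_lt.2 (le_of_lt this))
    · have ha1 : a < 1 := by
        rcases lt_or_eq_of_le haI.2 with h | h
        · exact h
        · exfalso; rw [h, hN1] at hgt; linarith
      have hev : {t | x < N t} ∈ nhdsWithin a unitI := hcw (Ioi_mem_nhds hgt)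
      rcases mem_nhdsWithin.1 hev with ⟨U, hUo, haU, hU⟩
      rcases Metric.isOpen_iff.1 hUo a haU with ⟨δ, hδ, hball⟩
      set t := min (a + δ/2) 1 with htdef
      have hta : a < t := lt_min (by linarith) ha1
      have htI : t ∈ unitI := ⟨le_trans haI.1 hta.le, min_le_right _ _⟩
      have htU : t ∈ U := hball (by
        rw [Metric.mem_ball, Real.dist_eq, abs_lt]
        have h2 : t ≤ a + δ/2 := min_le_left _ _
        constructor <;> linarith)
      have htS : t ∈ S := ⟨htI, hU ⟨htU, htI⟩⟩
      exact absurd (le_csSup (hbdd x) htS) (not_le.2 hta)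
  have hanti : ∀ x ∈ unitI, ∀ y ∈ unitI, x ≤ y → aleph y ≤ aleph x := by
    intro x hx y hy hxy
    rcases eq_or_lt_of_le hx.1 with h | hx0
    · rw [← h, h0]; exact (hmem y hy).2
    · have hy0 : (0:ℝ) < y := lt_of_lt_of_le hx0 hxy
      rw [hdef x ⟨hx0, hx.2⟩, hdef y ⟨hy0, hy.2⟩]
      apply Real.sSup_le
      · intro t ht
        exact le_csSup (hbdd x) ⟨ht.1, lt_of_le_of_lt hxy ht.2⟩
      · exact Real.sSup_nonneg (fun t ht => ht.1.1)
  have hstrict : StrictAntiOn aleph unitI := by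
    intro x hx y hy hxy
    rcases lt_or_eq_of_le (hanti x hx y hy hxy.le) with h | h
    · exact h
    · exfalso
      have h1x := key x hx
      have h1y := key y hy
      rw [h] at h1y
      rw [h1x] at h1y
      exact absurd h1y (ne_of_lt hxy)
  refine ⟨⟨hmem, h0, h1, hanti⟩, hstrict, key, ?_⟩
  rintro x ⟨y, hy, rfl⟩
  rw [key y hy]
end
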